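/- Let P and Q be orthogonal projections on a complex Hilbert space H. Then ‖PQ + QP‖ = ‖PQP‖ + ‖PQP‖^{1/2}. -/

import Mathlib

/-!
Write `c = ‖QP‖`; the C⋆-identity gives `‖PQP‖ = ‖(QP)⋆(QP)‖ = c²`, so the claim is
`‖PQ + QP‖ = c² + c`.

Lower bound: `PQ + QP = S² - S` for `S = P + Q`, hence `‖PQ + QP‖ ≥ ‖S‖² - ‖S‖`, and testing `S`
on `u + w` with `u ∈ range P`, `w ∈ range Q` a multiple of `Q u` of the same length as `u` gives
`‖S‖ ≥ 1 + c` (the two-dimensional picture, where `P + Q` has top eigenvalue `1 + cos θ`).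

Upper bound: `PQ + QP` is self-adjoint, so it suffices to bound its quadratic form. Splitting
`x = Px + (x - Px)` and putting `g = QPx`, the form is `2‖g‖² + 2 Re⟪x - Px, g - Pg⟫`, where
`‖g‖ ≤ c‖Px‖` and `‖Px‖ ‖g - Pg‖ ≤ ‖g‖ √(‖Px‖² - ‖g‖²)`; with `s = ‖g‖ / ‖Px‖ ≤ c`, AM-GM bounds
the form by `(s² + s)‖x‖² ≤ (c² + c)‖x‖²`.
-/

open scoped InnerProductSpace
open RCLike ContinuousLinearMap

lemma two_mul_sq_add_two_mul_le {a b c r w : ℝ} (ha : 0 ≤ a) (hc : 0 ≤ c)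
    (hw : 0 ≤ w) (hwr : w ≤ r) (hrc : r ≤ c * a)
    (hwa : a ^ 2 * w ^ 2 ≤ r ^ 2 * (a ^ 2 - r ^ 2)) :
    2 * r ^ 2 + 2 * b * w ≤ (c ^ 2 + c) * (a ^ 2 + b ^ 2) := by
  rcases ha.eq_or_lt with rfl | ha
  · obtain rfl : w = 0 := by nlinarith
    obtain rfl : r = 0 := by nlinarith
    linarith [mul_nonneg (by positivity : 0 ≤ c ^ 2 + c) (sq_nonneg b)]
  have hr : r = r / a * a := (div_mul_cancel₀ r ha.ne').symm
  set s := r / a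
  have hs0 : 0 ≤ s := div_nonneg (hw.trans hwr) ha.le
  have hsc : s ≤ c := (div_le_iff₀ ha).2 hrc
  have hs1 : s ≤ 1 := by
    refine (div_le_one ha).2 (not_lt.1 fun har => ?_)
    have : 0 < r ^ 2 * (r ^ 2 - a ^ 2) := mul_pos (pow_pos (ha.trans har) 2) (by nlinarith)
    nlinarith [sq_nonneg (a * w)]
  have hws : w ^ 2 ≤ (s - s ^ 2) * (s + s ^ 2) * a ^ 2 := by
    refine le_of_mul_le_mul_left ?_ (pow_pos ha 2)
    calc a ^ 2 * w ^ 2 ≤ r ^ 2 * (a ^ 2 - r ^ 2) := hwa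
      _ = a ^ 2 * ((s - s ^ 2) * (s + s ^ 2) * a ^ 2) := by rw [hr]; ring
  -- AM-GM for `√(s - s²) a` and `√(s + s²) b`
  have amgm : 2 * b * w ≤ (s - s ^ 2) * a ^ 2 + (s + s ^ 2) * b ^ 2 := by
    have hX : 0 ≤ (s - s ^ 2) * a ^ 2 := mul_nonneg (by nlinarith) (sq_nonneg a)
    have hY : 0 ≤ (s + s ^ 2) * b ^ 2 := by positivity
    nlinarith [sq_nonneg ((s - s ^ 2) * a ^ 2 - (s + s ^ 2) * b ^ 2),
      mul_le_mul_of_nonneg_left hws (sq_nonneg b)]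
  calc 2 * r ^ 2 + 2 * b * w
        ≤ 2 * s ^ 2 * a ^ 2 + ((s - s ^ 2) * a ^ 2 + (s + s ^ 2) * b ^ 2) := by rw [hr]; linarith
    _ = (s ^ 2 + s) * (a ^ 2 + b ^ 2) := by ring
    _ ≤ (c ^ 2 + c) * (a ^ 2 + b ^ 2) := by gcongr

section

variable {𝕜 E : Type*} [RCLike 𝕜] [NormedAddCommGroup E] [InnerProductSpace 𝕜 E]

lemma IsIdempotentElem.mul_add_mul_eq {R : Type*} [Ring R] {p q : R} (hp : IsIdempotentElem p)
    (hq : IsIdempotentElem q) : p * q + q * p = (p + q) * (p + q) - (p + q) := by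
  rw [add_mul, mul_add, mul_add, hp.eq, hq.eq]; abel

lemma IsSelfAdjoint.norm_sq_sub_norm_le {A : Type*} [NormedRing A] [StarRing A] [CStarRing A]
    {a : A} (ha : IsSelfAdjoint a) : ‖a‖ ^ 2 - ‖a‖ ≤ ‖a * a - a‖ := by
  simpa [ha.norm_mul_self] using norm_sub_norm_le (a * a) a

lemma ContinuousLinearMap.norm_le_of_abs_re_inner_le {T : E →L[𝕜] E} (hT : T.IsSymmetric)
    {M : ℝ} (hM : 0 ≤ M) (h : ∀ x, |re ⟪T x, x⟫_𝕜| ≤ M * ‖x‖ ^ 2) : ‖T‖ ≤ M := by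
  rw [T.norm_eq_iSup_rayleighQuotient hT]
  refine ciSup_le fun x => ?_
  rcases eq_or_ne x 0 with rfl | hx
  · simpa using hM
  · rw [rayleighQuotient, reApplyInnerSelf_apply, abs_div, abs_sq,
      div_le_iff₀ (by positivity)]
    exact h x

variable [CompleteSpace E] {P Q : E →L[𝕜] E}

namespace IsStarProjection

lemma apply_apply (hP : IsStarProjection P) (x : E) : P (P x) = P x := by
  rw [← mul_apply_eq_comp, hP.isIdempotentElem.eq]

lemma inner_apply_left (hP : IsStarProjection P) (x y : E) : ⟪P x, y⟫_𝕜 = ⟪x, P y⟫_𝕜 :=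
  hP.isSelfAdjoint.isSymmetric x y

lemma inner_apply_of_apply_eq (hP : IsStarProjection P) {y : E} (hy : P y = y) (x : E) :
    ⟪P x, y⟫_𝕜 = ⟪x, y⟫_𝕜 := by
  rw [hP.inner_apply_left, hy]

lemma re_inner_self_apply (hP : IsStarProjection P) (x : E) : re ⟪x, P x⟫_𝕜 = ‖P x‖ ^ 2 := by
  rw [← hP.inner_apply_of_apply_eq (hP.apply_apply x), inner_self_eq_norm_sq]

lemma re_inner_apply_self (hP : IsStarProjection P) (x : E) : re ⟪P x, x⟫_𝕜 = ‖P x‖ ^ 2 := by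
  rw [hP.inner_apply_left, hP.re_inner_self_apply]

lemma inner_sub_apply_apply (hP : IsStarProjection P) (x y : E) : ⟪x - P x, P y⟫_𝕜 = 0 := by
  rw [← hP.inner_apply_left, map_sub, hP.apply_apply, sub_self, inner_zero_left]

lemma norm_sub_apply_sq (hP : IsStarProjection P) (x : E) :
    ‖x - P x‖ ^ 2 = ‖x‖ ^ 2 - ‖P x‖ ^ 2 := by
  rw [norm_sub_sq (𝕜 := 𝕜), hP.re_inner_self_apply]; ring

lemma norm_apply_le (hP : IsStarProjection P) (x : E) : ‖P x‖ ≤ ‖x‖ :=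
  (sq_le_sq₀ (norm_nonneg _) (norm_nonneg _)).1 (by nlinarith [hP.norm_sub_apply_sq x])

lemma norm_sub_apply_le (hP : IsStarProjection P) (x : E) : ‖x - P x‖ ≤ ‖x‖ :=
  (sq_le_sq₀ (norm_nonneg _) (norm_nonneg _)).1 (by nlinarith [hP.norm_sub_apply_sq x])

lemma re_inner_le_norm_apply_mul (hP : IsStarProjection P) {y : E} (hy : P y = y) (x : E) :
    re ⟪x, y⟫_𝕜 ≤ ‖P x‖ * ‖y‖ := by
  rw [← hP.inner_apply_of_apply_eq hy]
  exact re_inner_le_norm _ _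

end IsStarProjection

lemma re_inner_anticommutator_apply_self (hP : IsStarProjection P) (hQ : IsStarProjection Q)
    (x : E) :
    re ⟪(P * Q + Q * P) x, x⟫_𝕜 =
      2 * ‖Q (P x)‖ ^ 2 + 2 * re ⟪x - P x, Q (P x) - P (Q (P x))⟫_𝕜 := by
  have hPQ : re ⟪P (Q x), x⟫_𝕜 = re ⟪x, Q (P x)⟫_𝕜 := by
    rw [hP.inner_apply_left, hQ.inner_apply_left]
  have hQP : re ⟪Q (P x), x⟫_𝕜 = re ⟪x, Q (P x)⟫_𝕜 := by
    rw [← inner_conj_symm, conj_re]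
  have hsplit : ⟪x, Q (P x)⟫_𝕜 = ⟪P x, Q (P x)⟫_𝕜 + ⟪x - P x, Q (P x) - P (Q (P x))⟫_𝕜 := by
    rw [inner_sub_right, hP.inner_sub_apply_apply, sub_zero, ← inner_add_left, add_sub_cancel]
  rw [add_apply, mul_apply_eq_comp, mul_apply_eq_comp, inner_add_left, map_add, hPQ, hQP,
    hsplit, map_add, hQ.re_inner_self_apply]
  ring

lemma sq_norm_mul_sq_norm_sub_le (hP : IsStarProjection P) (hQ : IsStarProjection Q)
    {u : E} (hu : P u = u) :
    ‖u‖ ^ 2 * ‖Q u - P (Q u)‖ ^ 2 ≤ ‖Q u‖ ^ 2 * (‖u‖ ^ 2 - ‖Q u‖ ^ 2) := by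
  have h : ‖Q u‖ ^ 2 ≤ ‖P (Q u)‖ * ‖u‖ := by
    rw [← hQ.re_inner_apply_self]
    exact hP.re_inner_le_norm_apply_mul hu (Q u)
  rw [hP.norm_sub_apply_sq]
  nlinarith [pow_le_pow_left₀ (sq_nonneg _) h 2]

lemma abs_re_inner_anticommutator_le (hP : IsStarProjection P) (hQ : IsStarProjection Q)
    (x : E) :
    |re ⟪(P * Q + Q * P) x, x⟫_𝕜| ≤ (‖Q * P‖ ^ 2 + ‖Q * P‖) * ‖x‖ ^ 2 := by
  set g := Q (P x)
  have hcross : |re ⟪x - P x, g - P g⟫_𝕜| ≤ ‖x - P x‖ * ‖g - P g‖ :=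
    (abs_re_le_norm _).trans (norm_inner_le_norm _ _)
  have hg : ‖g‖ ≤ ‖Q * P‖ * ‖P x‖ := by
    simpa only [mul_apply_eq_comp, hP.apply_apply] using (Q * P).le_opNorm (P x)
  have hreal := two_mul_sq_add_two_mul_le (b := ‖x - P x‖) (norm_nonneg (P x))
    (norm_nonneg (Q * P)) (norm_nonneg _) (hP.norm_sub_apply_le g) hg
    (sq_norm_mul_sq_norm_sub_le hP hQ (hP.apply_apply x))
  rw [re_inner_anticommutator_apply_self hP hQ, ← sub_add_cancel (‖x‖ ^ 2) (‖P x‖ ^ 2),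
    ← hP.norm_sub_apply_sq, abs_le]
  constructor <;> nlinarith [abs_le.1 hcross]

lemma norm_anticommutator_le (hP : IsStarProjection P) (hQ : IsStarProjection Q) :
    ‖P * Q + Q * P‖ ≤ ‖Q * P‖ ^ 2 + ‖Q * P‖ := by
  have hT : IsSelfAdjoint (P * Q + Q * P) := by
    rw [IsSelfAdjoint, star_add, star_mul, star_mul, hP.isSelfAdjoint.star_eq,
      hQ.isSelfAdjoint.star_eq, add_comm]
  exact norm_le_of_abs_re_inner_le hT.isSymmetric (by positivity)
    (abs_re_inner_anticommutator_le hP hQ)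

lemma norm_apply_add_norm_le (hP : IsStarProjection P) (hQ : IsStarProjection Q)
    {u : E} (hu : P u = u) : ‖Q u‖ + ‖u‖ ≤ ‖P + Q‖ * ‖u‖ := by
  rcases (norm_nonneg (Q u)).eq_or_lt with hr | hr
  · have hQu : Q u = 0 := norm_eq_zero.1 hr.symm
    have hSu : (P + Q) u = u := by rw [add_apply, hu, hQu, add_zero]
    calc ‖Q u‖ + ‖u‖ = ‖(P + Q) u‖ := by rw [hSu, hQu, norm_zero, zero_add]
      _ ≤ ‖P + Q‖ * ‖u‖ := (P + Q).le_opNorm u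
  set a := ‖u‖
  set r := ‖Q u‖
  have ha : 0 < a := hr.trans_le (hQ.norm_apply_le u)
  -- `v = ‖Q u‖ • (u + (‖u‖ / ‖Q u‖) • Q u)`
  set v : E := (r : 𝕜) • u + (a : 𝕜) • Q u with hv_def
  have hvu : re ⟪v, u⟫_𝕜 = a * r * (a + r) := by
    simp only [v, inner_add_left, inner_smul_real_left, map_add, smul_re, hQ.re_inner_apply_self,
      inner_self_eq_norm_sq]
    ring
  have hvQu : re ⟪v, Q u⟫_𝕜 = r ^ 2 * (a + r) := by
    simp only [v, inner_add_left, inner_smul_real_left, map_add, smul_re,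
      hQ.re_inner_self_apply, inner_self_eq_norm_sq]
    ring
  have hv : ‖v‖ ^ 2 = 2 * a * r ^ 2 * (a + r) := by
    rw [← inner_self_eq_norm_sq (𝕜 := 𝕜)]
    nth_rewrite 2 [hv_def]
    rw [inner_add_right, inner_smul_right, inner_smul_right, map_add, re_ofReal_mul,
      re_ofReal_mul, hvu, hvQu]
    ring
  clear_value v
  have hPv : r * (a + r) ≤ ‖P v‖ := by
    refine le_of_mul_le_mul_right ?_ ha
    linarith [hP.re_inner_le_norm_apply_mul hu v]
  have hQv : r * (a + r) ≤ ‖Q v‖ := by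
    refine le_of_mul_le_mul_right ?_ hr
    linarith [hQ.re_inner_le_norm_apply_mul (hQ.apply_apply u) v]
  have hSv : ‖P v‖ ^ 2 + ‖Q v‖ ^ 2 ≤ ‖P + Q‖ * ‖v‖ ^ 2 := by
    calc ‖P v‖ ^ 2 + ‖Q v‖ ^ 2 = re ⟪(P + Q) v, v⟫_𝕜 := by
          rw [add_apply, inner_add_left, map_add, hP.re_inner_apply_self, hQ.re_inner_apply_self]
      _ ≤ ‖(P + Q) v‖ * ‖v‖ := re_inner_le_norm _ _
      _ ≤ ‖P + Q‖ * ‖v‖ * ‖v‖ := by gcongr; exact (P + Q).le_opNorm v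
      _ = ‖P + Q‖ * ‖v‖ ^ 2 := by ring
  refine le_of_mul_le_mul_left ?_ (by positivity : 0 < 2 * r ^ 2 * (a + r))
  calc 2 * r ^ 2 * (a + r) * (r + a) = (r * (a + r)) ^ 2 + (r * (a + r)) ^ 2 := by ring
    _ ≤ ‖P v‖ ^ 2 + ‖Q v‖ ^ 2 := by gcongr
    _ ≤ ‖P + Q‖ * ‖v‖ ^ 2 := hSv
    _ = 2 * r ^ 2 * (a + r) * (‖P + Q‖ * a) := by rw [hv]; ring

lemma one_add_norm_mul_le_norm_add (hP : IsStarProjection P) (hQ : IsStarProjection Q)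
    (hP0 : P ≠ 0) : 1 + ‖Q * P‖ ≤ ‖P + Q‖ := by
  have hbound x := norm_apply_add_norm_le hP hQ (hP.apply_apply x)
  obtain ⟨x, hx⟩ : ∃ x, P x ≠ 0 := by simpa [ContinuousLinearMap.ext_iff] using hP0
  have hS : 1 ≤ ‖P + Q‖ := by
    refine le_of_mul_le_mul_right ?_ (norm_pos_iff.2 hx)
    linarith [hbound x, norm_nonneg (Q (P x))]
  suffices ‖Q * P‖ ≤ ‖P + Q‖ - 1 by linarith
  refine opNorm_le_bound _ (by linarith) fun x => ?_
  calc ‖(Q * P) x‖ ≤ (‖P + Q‖ - 1) * ‖P x‖ := by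
        rw [mul_apply_eq_comp]; linarith [hbound x]
    _ ≤ (‖P + Q‖ - 1) * ‖x‖ := mul_le_mul_of_nonneg_left (hP.norm_apply_le x) (by linarith)

lemma norm_sq_add_norm_le_norm_anticommutator (hP : IsStarProjection P)
    (hQ : IsStarProjection Q) : ‖Q * P‖ ^ 2 + ‖Q * P‖ ≤ ‖P * Q + Q * P‖ := by
  rcases eq_or_ne P 0 with rfl | hP0
  · simp
  have hS := one_add_norm_mul_le_norm_add hP hQ hP0
  have hsq := (hP.isSelfAdjoint.add hQ.isSelfAdjoint).norm_sq_sub_norm_le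
  rw [hP.isIdempotentElem.mul_add_mul_eq hQ.isIdempotentElem]
  nlinarith [norm_nonneg (Q * P)]

end

/-- For orthogonal projections `P, Q` on a complex Hilbert space,
`‖PQ + QP‖ = ‖PQP‖ + ‖PQP‖^{1/2}`. -/
theorem norm_anticommutator_eq'
    {H : Type*} [NormedAddCommGroup H] [InnerProductSpace ℂ H] [CompleteSpace H]
    (P Q : H →L[ℂ] H) (hP : IsSelfAdjoint P) (hP2 : P * P = P)
    (hQ : IsSelfAdjoint Q) (hQ2 : Q * Q = Q) :
    ‖P * Q + Q * P‖ = ‖P * Q * P‖ + Real.sqrt ‖P * Q * P‖ := by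
  have hP' : IsStarProjection P := ⟨hP2, hP⟩
  have hQ' : IsStarProjection Q := ⟨hQ2, hQ⟩
  have hPQP : ‖P * Q * P‖ = ‖Q * P‖ ^ 2 := by
    rw [sq, ← CStarRing.norm_star_mul_self, star_mul, hP.star_eq, hQ.star_eq]
    congr 1
    rw [← mul_assoc, mul_assoc P Q Q, hQ2]
  rw [hPQP, Real.sqrt_sq (norm_nonneg _)]
  exact (norm_anticommutator_le hP' hQ').antisymm
    (norm_sq_add_norm_le_norm_anticommutator hP' hQ')
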